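/- arXiv:2310.13796 — 3 statements merged into one kernel-verified Lean document; each statement's English description precedes it below -/
import Mathlib

section
/- If there is a μ-connecting walk from α to β given C in a directed graph D, then there is a μ-connecting walk from α to β given C in D such that all colliders on the walk are in C. -/
variable {V : Type*}

/-- A walk in a directed graph given by edge relation `E`. Each step either
traverses an edge forward (head at the next node) or backward (head at the
current node). -/
inductive Walk (E : V → V → Prop) : V → V → Type _
  | nil (a : V) : Walk E a a
  | fwd {a b c : V} (h : E a b) (w : Walk E b c) : Walk E a c
  | bwd {a b c : V} (h : E b a) (w : Walk E b c) : Walk E a c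

namespace Walk

variable {E : V → V → Prop}

def length : ∀ {a b : V}, Walk E a b → ℕ
  | _, _, nil _ => 0
  | _, _, fwd _ w => w.length + 1
  | _, _, bwd _ w => w.length + 1

def nodes : ∀ {a b : V}, Walk E a b → List V
  | a, _, nil _ => [a]
  | a, _, fwd _ w => a :: w.nodes
  | a, _, bwd _ w => a :: w.nodes

/-- The nonendpoint (interior) nodes of a walk. -/
def inner {a b : V} (w : Walk E a b) : List V := (w.nodes.drop 1).dropLast

/-- Colliders of a walk; the boolean records whether the previous edge has a
head at the current node. -/
def collidersAux : ∀ {a b : V}, Walk E a b → Bool → List V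
  | _, _, nil _, _ => []
  | _, _, fwd _ w, _ => w.collidersAux true
  | a, _, bwd _ w, prev => (if prev then [a] else []) ++ w.collidersAux false

/-- The list of collider nodes of a walk. -/
def colliders {a b : V} (w : Walk E a b) : List V := w.collidersAux false

/-- Whether the final edge of the walk has a head at the last node; the boolean
argument is the value returned for the trivial walk. -/
def lastHead : ∀ {a b : V}, Walk E a b → Bool → Bool
  | _, _, nil _, cur => cur
  | _, _, fwd _ w, _ => w.lastHead true
  | _, _, bwd _ w, _ => w.lastHead false

/-- A directed walk: every edge points towards the final node. -/
def directed : ∀ {a b : V}, Walk E a b → Prop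
  | _, _, nil _ => True
  | _, _, fwd _ w => w.directed
  | _, _, bwd _ _ => False

/-- A path is a walk with no repeated nodes. -/
def isPath {a b : V} (w : Walk E a b) : Prop := w.nodes.Nodup

end Walk

/-- `a` is an ancestor of the set `C`: there is a (possibly trivial) directed
walk from `a` to some node of `C`. -/
def ancestorOf (E : V → V → Prop) (a : V) (C : Set V) : Prop :=
  ∃ c ∈ C, Relation.ReflTransGen E a c

/-- Conditions on the nonendpoint nodes of a walk for μ-connectedness:
every collider is an ancestor of `C` and no noncollider is in `C`. The boolean
records whether the previous edge has a head at the current node. -/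
def Walk.innerOK (E : V → V → Prop) (C : Set V) : ∀ {a b : V}, Walk E a b → Bool → Prop
  | _, _, .nil _, _ => True
  | a, _, .fwd _ w, _ => a ∉ C ∧ Walk.innerOK E C w true
  | a, _, .bwd _ w, prev =>
      (if prev then ancestorOf E a C else a ∉ C) ∧ Walk.innerOK E C w false

/-- A walk is μ-connecting given `C` if it is nontrivial, its first node is not
in `C`, all colliders are ancestors of `C`, no noncolliders are in `C`, and the
final edge has a head at the last node. -/
def Walk.muConn (E : V → V → Prop) (C : Set V) : ∀ {a b : V}, Walk E a b → Prop
  | a, _, .nil _ => False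
  | a, _, .fwd _ w => a ∉ C ∧ Walk.innerOK E C w true ∧ w.lastHead true = true
  | a, _, .bwd _ w => a ∉ C ∧ Walk.innerOK E C w false ∧ w.lastHead false = true

/-- μ-separation: `B` is μ-separated from `A` given `C` if there is no
μ-connecting walk from a node of `A \ C` to a node of `B` given `C`. -/
def muSep (E : V → V → Prop) (A B C : Set V) : Prop :=
  ¬ ∃ a ∈ A \ C, ∃ b ∈ B, ∃ w : Walk E a b, Walk.muConn E C w

/-- An independence model over `V` is a set of triples of subsets of `V`. -/
abbrev IndepModel (V : Type*) := Set (Set V × Set V × Set V)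

/-- The independence model of all μ-separations of the graph with edges `E`. -/
def ID (E : V → V → Prop) : IndepModel V := {t | muSep E t.1 t.2.1 t.2.2}

/-- Transitive closedness of `I` with respect to the graph `E`:
conditions D0–D3 hold for every edge and every set `C`. -/
def TransClosed (I : IndepModel V) (E : V → V → Prop) : Prop :=
  ∀ (C : Set V) (α β : V), E α β →
    (α ∉ C → ({α}, {β}, C) ∉ I) ∧
    (α ∉ C → ∀ γ, ¬ muSep E {γ} {α} C → ({γ}, {β}, C) ∉ I) ∧
    (α ∉ C → β ∈ C → ∀ γ δ, ¬ muSep E {γ} {β} C → ¬ muSep E {α} {δ} C →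
      ({γ}, {δ}, C) ∉ I) ∧
    (α ∉ C → ∀ γ, ¬ muSep E {α} {γ} C → ({β}, {γ}, C) ∉ I)

def LeftDecomp (I : IndepModel V) : Prop :=
  ∀ A B C D : Set V, (A, B, C) ∈ I → D ⊆ A → (D, B, C) ∈ I

def RightDecomp (I : IndepModel V) : Prop :=
  ∀ A B C D : Set V, (A, B, C) ∈ I → D ⊆ B → (A, D, C) ∈ I

def LeftWeakUnion (I : IndepModel V) : Prop :=
  ∀ A B C D : Set V, (A, B, C) ∈ I → D ⊆ A → (A, B, C ∪ D) ∈ I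

def LeftContraction (I : IndepModel V) : Prop :=
  ∀ A B C D : Set V, (A, B, C) ∈ I → (D, B, A ∪ C) ∈ I → (A ∪ D, B, C) ∈ I

/-- `I` is causally minimal with respect to `E`: it is Markov with respect to
`E` and not Markov with respect to any proper subgraph. -/
def CausallyMinimal (I : IndepModel V) (E : V → V → Prop) : Prop :=
  ID E ⊆ I ∧ ∀ E' : V → V → Prop, (∀ a b, E' a b → E a b) → E' ≠ E → ¬ ID E' ⊆ I

/-- The pairwise Markov property of `I` with respect to the graph `G`. -/
def PairwiseMarkov (I : IndepModel V) (G : V → V → Prop) : Prop :=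
  ∀ α β : V, ¬ G α β → ({α}, {β}, (Set.univ \ {α} : Set V)) ∈ I

/-- The set of parents of `β` in the graph `E` (excluding `β` itself). -/
def pa (E : V → V → Prop) (β : V) : Set V := {γ | E γ β ∧ γ ≠ β}

/-- Auxiliary: a nonempty directed path. -/
inductive DPath (E : V → V → Prop) : V → V → Type _
  | single {a c : V} (h : E a c) : DPath E a c
  | cons {a x c : V} (h : E a x) (p : DPath E x c) : DPath E a c

namespace DPath

variable {E : V → V → Prop}

/-- All nodes except the last are outside `C`. -/
def okC (C : Set V) : ∀ {a c : V}, DPath E a c → Prop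
  | a, _, single _ => a ∉ C
  | a, _, cons _ p => a ∉ C ∧ p.okC C

/-- Walk down the path and back up, then continue with `w`. -/
def detour : ∀ {a c d : V}, DPath E a c → Walk E a d → Walk E a d
  | _, _, _, single h, w => .fwd h (.bwd h w)
  | _, _, _, cons h p, w => .fwd h (p.detour (.bwd h w))

lemma okC_head {C : Set V} : ∀ {a c : V} {p : DPath E a c}, p.okC C → a ∉ C
  | _, _, single _, h => h
  | _, _, cons _ _, h => h.1

lemma detour_innerOK {C : Set V} (hC : ∀ x ∈ C, ancestorOf E x C) :
    ∀ {a c d : V} (p : DPath E a c) (_ : c ∈ C) (_ : p.okC C)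
      (w : Walk E a d) (_ : Walk.innerOK E C w false) (prev : Bool),
      Walk.innerOK E C (p.detour w) prev
  | _, _, _, single h, hc, hok, w, hw, prev => by
      refine ⟨hok, ?_, hw⟩
      simpa using hC _ hc
  | _, _, _, cons h p, hc, hok, w, hw, prev => by
      refine ⟨hok.1, detour_innerOK hC p hc hok.2 (.bwd h w) ⟨?_, hw⟩ true⟩
      simpa using okC_head hok.2

lemma detour_colliders :
    ∀ {a c d : V} (p : DPath E a c) (w : Walk E a d) (prev : Bool),
      (p.detour w).collidersAux prev = c :: w.collidersAux false
  | _, _, _, single h, w, prev => rfl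
  | _, _, _, cons h p, w, prev => by
      show (p.detour (.bwd h w)).collidersAux true = _
      rw [detour_colliders p (.bwd h w) true]
      rfl

lemma detour_lastHead :
    ∀ {a c d : V} (p : DPath E a c) (w : Walk E a d) (prev : Bool),
      (p.detour w).lastHead prev = w.lastHead false
  | _, _, _, single h, w, prev => rfl
  | _, _, _, cons h p, w, prev => by
      show (p.detour (.bwd h w)).lastHead true = _
      rw [detour_lastHead p (.bwd h w) true]
      rfl

end DPath

/-- First hit of `C` along a directed walk. -/
lemma firstHit {E : V → V → Prop} {C : Set V} :
    ∀ {a c : V}, Relation.ReflTransGen E a c → c ∈ C → a ∉ C →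
      ∃ c', c' ∈ C ∧ ∃ p : DPath E a c', p.okC C := by
  intro a c h
  induction h using Relation.ReflTransGen.head_induction_on with
  | refl => intro hc ha; exact absurd hc ha
  | @head a x hax hxc ih =>
      intro hc ha
      by_cases hx : x ∈ C
      · exact ⟨_, hx, DPath.single hax, ha⟩
      · obtain ⟨c', hc', p, hp⟩ := ih hc hx
        exact ⟨c', hc', DPath.cons hax p, ha, hp⟩

/-- Fix a walk: same endpoints, same `innerOK`/`lastHead` data, all colliders
in `C`. -/
lemma fixWalk {E : V → V → Prop} {C : Set V} :
    ∀ {a b : V} (w : Walk E a b) (prev : Bool), Walk.innerOK E C w prev →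
      ∃ w' : Walk E a b, Walk.innerOK E C w' prev ∧
        w'.lastHead prev = w.lastHead prev ∧
        ∀ v ∈ w'.collidersAux prev, v ∈ C
  | _, _, .nil a, prev, _ => ⟨.nil a, trivial, rfl, by simp [Walk.collidersAux]⟩
  | _, _, .fwd h w, prev, hok => by
      obtain ⟨w', h1, h2, h3⟩ := fixWalk w true hok.2
      exact ⟨.fwd h w', ⟨hok.1, h1⟩, h2, h3⟩
  | _, _, .bwd h w, false, hok => by
      obtain ⟨w', h1, h2, h3⟩ := fixWalk w false hok.2
      refine ⟨.bwd h w', ⟨hok.1, h1⟩, h2, ?_⟩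
      simpa [Walk.collidersAux] using h3
  | a, _, .bwd h w, true, hok => by
      obtain ⟨w', h1, h2, h3⟩ := fixWalk w false hok.2
      by_cases ha : a ∈ C
      · refine ⟨.bwd h w', ⟨?_, h1⟩, h2, ?_⟩
        · simpa using ⟨a, ha, Relation.ReflTransGen.refl⟩
        · intro v hv
          simp [Walk.collidersAux] at hv
          rcases hv with rfl | hv
          · exact ha
          · exact h3 v hv
      · obtain ⟨c, hcC, hanc⟩ := hok.1
        obtain ⟨c', hc', p, hp⟩ := firstHit hanc hcC ha
        refine ⟨p.detour (.bwd h w'), ?_, ?_, ?_⟩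
        · exact DPath.detour_innerOK
            (fun x hx => ⟨x, hx, Relation.ReflTransGen.refl⟩)
            p hc' hp (.bwd h w') ⟨ha, h1⟩ true
        · rw [DPath.detour_lastHead]
          exact h2
        · rw [DPath.detour_colliders]
          intro v hv
          rcases List.mem_cons.mp hv with rfl | hv
          · exact hc'
          · simp [Walk.collidersAux] at hv
            exact h3 v hv

/-- if there is a μ-connecting walk from `a` to `b` given `C`,
then there is one all of whose colliders are in `C`. -/
theorem stmt1 {V : Type*} {E : V → V → Prop} {C : Set V} {a b : V}
    (h : ∃ w : Walk E a b, Walk.muConn E C w) :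
    ∃ w : Walk E a b, Walk.muConn E C w ∧ ∀ v ∈ w.colliders, v ∈ C := by
  obtain ⟨w, hw⟩ := h
  cases w with
  | nil => exact absurd hw (by simp [Walk.muConn])
  | fwd h u =>
      obtain ⟨ha, hok, hlast⟩ := hw
      obtain ⟨u', h1, h2, h3⟩ := fixWalk u true hok
      exact ⟨.fwd h u', ⟨ha, h1, h2.trans hlast⟩, h3⟩
  | bwd h u =>
      obtain ⟨ha, hok, hlast⟩ := hw
      obtain ⟨u', h1, h2, h3⟩ := fixWalk u false hok
      refine ⟨.bwd h u', ⟨ha, h1, h2.trans hlast⟩, ?_⟩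
      intro v hv
      exact h3 v (by simpa [Walk.colliders, Walk.collidersAux] using hv)
end

section
/- Let D₁ = (V,E₁) and D₂ = (V,E₂) be directed graphs containing all self-edges. If I(D₁) ⊆ I(D₂), then E₂ ⊆ E₁. -/
variable {V : Type*}

/-- Key lemma: along any walk satisfying `innerOK` whose last edge has a head
at `b`, either some node outside `C` has an edge into `b`, or the walk is
trivial with `prev = true`. -/
lemma keyM {E : V → V → Prop} {C : Set V} {b : V} :
    ∀ {x : V} (w : Walk E x b) (prev : Bool), Walk.innerOK E C w prev →
      w.lastHead prev = true → (∃ γ ∉ C, E γ b) ∨ (x = b ∧ prev = true) := by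
  intro x w
  induction w with
  | nil a => exact fun prev _ hl => Or.inr ⟨rfl, hl⟩
  | fwd h w ih =>
      rintro prev ⟨hx, ho⟩ hl
      rcases ih true ho hl with h' | ⟨hy, _⟩
      · exact Or.inl h'
      · exact Or.inl ⟨_, hx, hy ▸ h⟩
  | bwd h w ih =>
      rintro prev ⟨hx, ho⟩ hl
      rcases ih false ho hl with h' | ⟨_, hf⟩
      · exact Or.inl h'
      · simp at hf

/-- for directed graphs with all self-edges, if
`I(D₁) ⊆ I(D₂)` then every edge of `D₂` is an edge of `D₁`. -/
theorem stmt8 {V : Type*} (E₁ E₂ : V → V → Prop)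
    (hself₁ : ∀ v, E₁ v v) (hself₂ : ∀ v, E₂ v v)
    (hsub : ID E₁ ⊆ ID E₂) :
    ∀ a b : V, E₂ a b → E₁ a b := by
  intro a b hE2
  by_contra hE1
  set C : Set V := Set.univ \ {a} with hC
  have hγa : ∀ γ : V, γ ∉ C → γ = a := by
    intro γ hγ
    by_contra hne
    exact hγ ⟨Set.mem_univ γ, hne⟩
  have hsep : muSep E₁ {a} {b} C := by
    rintro ⟨a', ⟨ha', _⟩, b', hb', w, hw⟩
    rw [Set.mem_singleton_iff] at ha' hb'
    subst ha'; subst hb'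
    cases w with
    | nil => exact hw
    | fwd h w' =>
        obtain ⟨ha, ho, hl⟩ := hw
        rcases keyM w' true ho hl with ⟨γ, hγ, hγb⟩ | ⟨hy, _⟩
        · exact hE1 (hγa γ hγ ▸ hγb)
        · exact hE1 (hy ▸ h)
    | bwd h w' =>
        obtain ⟨ha, ho, hl⟩ := hw
        rcases keyM w' false ho hl with ⟨γ, hγ, hγb⟩ | ⟨_, hf⟩
        · exact hE1 (hγa γ hγ ▸ hγb)
        · simp at hf
  have hmem : ({a}, {b}, C) ∈ ID E₂ := hsub hsep
  have haC : a ∉ C := fun h => h.2 rfl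
  exact hmem ⟨a, ⟨rfl, haC⟩, b, rfl, .fwd hE2 (.nil b), haC, trivial, rfl⟩
end

section
/- The induced local independence graph D_I is the unique graph that is causally minimal with respect to I: any graph D with I(D) ⊆ I is a supergraph of D_I, and if D is moreover causally minimal then D = D_I. -/
variable {V : Type*}

/-- The induced local independence graph `D_I`. -/
def DI {V : Type*} (I : IndepModel V) : V → V → Prop :=
  fun α β => α = β ∨ ({α}, {β}, (Set.univ \ {α} : Set V)) ∉ I

private lemma walk_aux {V : Type*} {E : V → V → Prop} {β : V} (C : Set V) :
    ∀ {a : V} (w : Walk E a β) (prev : Bool), Walk.innerOK E C w prev →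
      w.lastHead prev = true →
      (∃ x, x ∉ C ∧ E x β) ∨ (a = β ∧ prev = true) := by
  intro a w
  induction w with
  | nil a =>
    intro prev _ hlast
    exact Or.inr ⟨rfl, hlast⟩
  | fwd h w ih =>
    intro prev hOK hlast
    simp only [Walk.innerOK] at hOK
    simp only [Walk.lastHead] at hlast
    obtain ⟨haC, hOK'⟩ := hOK
    rcases ih true hOK' hlast with hx | ⟨rfl, _⟩
    · exact Or.inl hx
    · exact Or.inl ⟨_, haC, h⟩
  | bwd h w ih =>
    intro prev hOK hlast
    simp only [Walk.innerOK] at hOK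
    simp only [Walk.lastHead] at hlast
    obtain ⟨_, hOK'⟩ := hOK
    rcases ih false hOK' hlast with hx | ⟨_, hf⟩
    · exact Or.inl hx
    · simp at hf

private lemma muSep_of_not_edge {V : Type*} {E : V → V → Prop} {α β : V}
    (h : ¬ E α β) : muSep E {α} {β} (Set.univ \ {α}) := by
  rintro ⟨a, ha, b, hb, w, hconn⟩
  have ha1 : α = a := ha.1.symm
  subst ha1
  have hb1 : β = b := hb.symm
  subst hb1
  have key : ∀ x, x ∉ (Set.univ \ {α} : Set V) → x = α := by
    intro x hx
    by_contra hxne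
    exact hx ⟨trivial, hxne⟩
  cases w with
  | nil => exact hconn
  | fwd h' w' =>
    obtain ⟨hαC, hOK, hlast⟩ := hconn
    rcases walk_aux (Set.univ \ {α}) w' true hOK hlast with ⟨x, hxC, hxβ⟩ | ⟨rfl, _⟩
    · exact h ((key x hxC) ▸ hxβ)
    · exact h h'
  | bwd h' w' =>
    obtain ⟨hαC, hOK, hlast⟩ := hconn
    rcases walk_aux (Set.univ \ {α}) w' false hOK hlast with ⟨x, hxC, hxβ⟩ | ⟨_, hf⟩
    · exact h ((key x hxC) ▸ hxβ)
    · simp at hf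

/-- `D_I` is the unique causally minimal graph with respect to
`I`: any Markov graph is a supergraph of `D_I`, and any causally minimal graph
equals `D_I`. -/
theorem stmt10 {V : Type*} (I : IndepModel V)
    (hmin : CausallyMinimal I (DI I)) :
    (∀ E : V → V → Prop, (∀ v, E v v) → ID E ⊆ I → ∀ a b, DI I a b → E a b) ∧
    (∀ E : V → V → Prop, (∀ v, E v v) → CausallyMinimal I E → E = DI I) := by
  have part1 : ∀ E : V → V → Prop, (∀ v, E v v) → ID E ⊆ I →
      ∀ a b, DI I a b → E a b := by
    intro E hself hE a b hab
    rcases hab with rfl | hni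
    · exact hself a
    · by_contra hne
      exact hni (hE (muSep_of_not_edge hne))
  refine ⟨part1, ?_⟩
  intro E hself hcm
  by_contra hne
  have hsub : ∀ a b, DI I a b → E a b := part1 E hself hcm.1
  exact hcm.2 (DI I) hsub (fun h => hne h.symm) hmin.1
end
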